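/- Let $q = 2^n$ with $n \geq 2$. Suppose $a, c \in \mathbb{F}_{q^2}^*$, $b \in \mathbb{F}_{q^2}$, and $s \in \mathbb{F}_{q^2}[x]$ with $\deg s \leq 3$ satisfy $h(c\,y_0 + s(x_0)) = (a x_0 + b)^{q+1}$ for every pair $(x_0, y_0) \in \mathbb{F}_{q^2}^2$ with $h(y_0) = x_0^{q+1}$. Then $c = 1$ and $s(x) = a^2 b^{2q} x^2 + a b^q x + e$ for some $e \in \mathbb{F}_{q^2}$ with $h(e) = b^{q+1}$. -/

import Mathlib

/-- The Abdón--Torres additive polynomial map `h(y) = y^(q/2) + ... + y^2 + y`. -/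
noncomputable def hAT (n : ℕ) (y : GaloisField 2 (2*n)) : GaloisField 2 (2*n) :=
  ∑ i ∈ Finset.range n, y ^ (2 ^ i)

/-!
Write `q = 2 ^ n`. Since `h(y)² + h(y) = y^q + y`, the image of `h` lies in the zero set of
`(X² + X)^q + X² + X`, which has at most `2q` points, while fibres of `h` have at most `q/2`
points; so the image is that whole zero set and contains `𝔽_q`, in particular every norm
`x^(q+1)`. Taking `x₀ = 0` shows that multiplication by `c` preserves the kernel of `h`, which
contains `z² + z` for `z ∈ 𝔽_q`. Writing `c = r²` and using `z^q = z`, the additive polynomial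
`h((r + r²) z) + (r^q + r) z` of degree `q/2` vanishes on `𝔽_q`, so its `X²`-coefficient
`(r + r²)²` is zero and `c = 1`. Then `x^(q+1) + h(s(x)) = (a x + b)^(q+1)` for every `x`, an
identity of polynomials of degree `< q²`, and its coefficients of `1, X, X³, X^q` determine `s`.
-/

open Polynomial Finset

namespace Polynomial

theorem coeff_pow_expChar_pow {R : Type*} [CommSemiring R] (p : ℕ) [ExpChar R p]
    (f : R[X]) (k m : ℕ) :
    (f ^ p ^ k).coeff m = if p ^ k ∣ m then f.coeff (m / p ^ k) ^ p ^ k else 0 := by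
  rw [← map_iterateFrobenius_expand, coeff_map, coeff_expand (expChar_pow_pos R p k)]
  split_ifs <;> simp [iterateFrobenius_def, zero_pow (expChar_pow_pos R p k).ne']

theorem natDegree_sum_pow_two_pow_le {R : Type*} [Semiring R] (n : ℕ) (f : R[X]) :
    (∑ i ∈ range n, f ^ 2 ^ i).natDegree ≤ 2 ^ (n - 1) * f.natDegree := by
  refine natDegree_sum_le_of_forall_le _ _ fun i hi => natDegree_pow_le.trans ?_
  gcongr
  · norm_num
  · have := mem_range.mp hi; omega

section Frobenius

variable {R : Type*} [CommSemiring R] [CharP R 2] (n : ℕ) (f : R[X])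

theorem coeff_sum_pow_two_pow (m : ℕ) :
    (∑ i ∈ range n, f ^ 2 ^ i).coeff m =
      ∑ i ∈ range n, if 2 ^ i ∣ m then f.coeff (m / 2 ^ i) ^ 2 ^ i else 0 := by
  simp only [finsetSum_coeff, coeff_pow_expChar_pow]

theorem coeff_sum_pow_two_pow_of_odd (hn : n ≠ 0) {m : ℕ} (hm : Odd m) :
    (∑ i ∈ range n, f ^ 2 ^ i).coeff m = f.coeff m := by
  rw [coeff_sum_pow_two_pow, sum_eq_single 0]
  · simp
  · intro i _ hi
    rw [if_neg]
    exact fun h => hm.not_two_dvd_nat ((dvd_pow_self 2 hi).trans h)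
  · simp [Nat.pos_of_ne_zero hn]

theorem coeff_two_sum_pow_two_pow (hn : 2 ≤ n) :
    (∑ i ∈ range n, f ^ 2 ^ i).coeff 2 = f.coeff 2 + f.coeff 1 ^ 2 := by
  rw [coeff_sum_pow_two_pow, range_eq_Ico, ← sum_Ico_consecutive _ (by omega : 0 ≤ 2) hn,
    sum_eq_zero (s := Ico 2 n)]
  · simp [sum_range_succ]
  · intro i hi
    rw [if_neg]
    intro h
    have := Nat.le_of_dvd two_pos h
    have := Nat.pow_le_pow_right two_pos (mem_Ico.mp hi).1
    omega

theorem coeff_two_pow_sum_pow_two_pow_of_natDegree_le_three (hn : n ≠ 0)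
    (hf : f.natDegree ≤ 3) :
    (∑ i ∈ range n, f ^ 2 ^ i).coeff (2 ^ n) = f.coeff 2 ^ 2 ^ (n - 1) := by
  rw [coeff_sum_pow_two_pow, sum_eq_single (n - 1)]
  · rw [if_pos (pow_dvd_pow 2 (n.sub_le 1)), Nat.pow_div (n.sub_le 1) two_pos,
      Nat.sub_sub_self (Nat.one_le_iff_ne_zero.mpr hn), pow_one]
  · intro i hi hne
    have hi := mem_range.mp hi
    rw [if_pos (pow_dvd_pow 2 hi.le), Nat.pow_div hi.le two_pos,
      coeff_eq_zero_of_natDegree_lt, zero_pow (by positivity)]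
    calc f.natDegree < 2 ^ 2 := by omega
      _ ≤ 2 ^ (n - i) := Nat.pow_le_pow_right two_pos (by omega)
  · simp [Nat.pos_of_ne_zero hn]

end Frobenius

variable {K : Type*} [Field K] [Fintype K] [DecidableEq K]

theorem card_filter_eval_eq_zero_le {f : K[X]} (hf : f ≠ 0) :
    #{x | f.eval x = 0} ≤ f.natDegree :=
  card_le_degree_of_subset_roots fun x hx => by simpa [mem_roots hf] using hx

theorem card_le_natDegree_mul_card_image_eval (f : K[X]) (hf : 0 < f.natDegree) :
    Fintype.card K ≤ f.natDegree * #(univ.image (eval · f)) := by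
  refine card_le_mul_card_image univ _ fun w _ => ?_
  have hdeg : (f - C w).natDegree = f.natDegree := natDegree_sub_C
  have hne : f - C w ≠ 0 := fun h => by simp [h] at hdeg; omega
  simpa [hdeg, sub_eq_zero] using card_filter_eval_eq_zero_le hne

end Polynomial

theorem FiniteField.le_card_filter_pow_eq_self {K : Type*} [Field K] [Fintype K] [DecidableEq K]
    {p n : ℕ} [Fact p.Prime] [CharP K p] (hn : n ≠ 0) (hK : Fintype.card K = p ^ (2 * n)) :
    p ^ n ≤ #{z : K | z ^ p ^ n = z} := by
  have hq : 1 < p ^ n := Nat.one_lt_pow hn (Fact.out : p.Prime).one_lt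
  have htr : (X ^ p ^ n + X : K[X]).natDegree = p ^ n := by
    rw [natDegree_add_eq_left_of_natDegree_lt] <;> simp [hq]
  -- the trace `y ↦ y ^ q + y` maps `K` into the fixed points of `z ↦ z ^ q`, with fibres of
  -- size at most `q`
  have hsub : univ.image (eval · (X ^ p ^ n + X : K[X])) ⊆ ({z | z ^ p ^ n = z} : Finset K) := by
    simp only [subset_iff, mem_image, mem_filter, mem_univ, true_and, forall_exists_index,
      forall_apply_eq_imp_iff, eval_add, eval_pow, eval_X]
    intro y
    rw [add_pow_char_pow, ← pow_mul, ← pow_add, ← two_mul, ← hK, FiniteField.pow_card, add_comm]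
  have := card_le_natDegree_mul_card_image_eval _ (htr ▸ (by omega : 0 < p ^ n))
  rw [hK, htr, two_mul, pow_add] at this
  exact (Nat.le_of_mul_le_mul_left this (by omega)).trans (card_le_card hsub)

theorem GaloisField.fintype_card (p : ℕ) [Fact p.Prime] (n : ℕ) [Fintype (GaloisField p n)]
    (h : n ≠ 0) : Fintype.card (GaloisField p n) = p ^ n :=
  Nat.card_eq_fintype_card.symm.trans (GaloisField.card p n h)

theorem GaloisField.pow_card_eq_self {p n : ℕ} [Fact p.Prime] (x : GaloisField p n) :
    x ^ p ^ n = x := by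
  rcases eq_or_ne n 0 with rfl | hn
  · rw [pow_zero, pow_one]
  · have := Fintype.ofFinite (GaloisField p n)
    rw [← GaloisField.fintype_card p n hn, FiniteField.pow_card]

variable {n : ℕ}

local notation "F" => GaloisField 2 (2 * n)

theorem hAT_add (x y : F) : hAT n (x + y) = hAT n x + hAT n y := by
  simp only [hAT, ← sum_add_distrib, add_pow_char_pow]

theorem hAT_zero : hAT n (0 : F) = 0 := by
  simp [hAT]

theorem hAT_sq (y : F) : hAT n (y ^ 2) = hAT n y ^ 2 := by
  rw [hAT, hAT, sum_pow_char]
  exact sum_congr rfl fun i _ => pow_right_comm ..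

theorem hAT_sq_add_hAT (y : F) : hAT n y ^ 2 + hAT n y = y ^ 2 ^ n + y := by
  have h : hAT n y ^ 2 = ∑ i ∈ range n, y ^ 2 ^ (i + 1) := by
    rw [hAT, sum_pow_char]
    exact sum_congr rfl fun i _ => by rw [← pow_mul, ← pow_succ]
  rw [← CharTwo.sub_eq_add, h, hAT, ← sum_sub_distrib, sum_range_sub (fun i => y ^ 2 ^ i),
    pow_zero, pow_one, CharTwo.sub_eq_add]

theorem hAT_sq_eq_add (v : F) : hAT n (v ^ 2) = hAT n v + v ^ 2 ^ n + v := by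
  have := hAT_sq_add_hAT v
  rw [hAT_sq]
  grind

theorem eval_sum_pow_two_pow (f : F[X]) (x : F) :
    (∑ i ∈ range n, f ^ 2 ^ i).eval x = hAT n (f.eval x) := by
  simp [hAT, eval_finsetSum]

theorem coeff_zero_sum_pow_two_pow (f : F[X]) :
    (∑ i ∈ range n, f ^ 2 ^ i).coeff 0 = hAT n (f.coeff 0) := by
  rw [coeff_sum_pow_two_pow]
  simp [hAT]

theorem two_pow_succ_le_card_image_hAT [Fintype F] [DecidableEq F] (hn : n ≠ 0) :
    2 ^ (n + 1) ≤ #(univ.image (hAT n)) := by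
  set L : F[X] := ∑ i ∈ range n, X ^ 2 ^ i
  have hL : (eval · L) = hAT n := funext fun y => by simpa using eval_sum_pow_two_pow (n := n) X y
  have hLdeg : L.natDegree ≤ 2 ^ (n - 1) := by
    simpa using natDegree_sum_pow_two_pow_le n (X : F[X])
  have hLpos : 0 < L.natDegree :=
    le_natDegree_of_ne_zero (by simp [L, coeff_sum_pow_two_pow_of_odd n X hn odd_one])
  have himage := card_le_natDegree_mul_card_image_eval L hLpos
  rw [GaloisField.fintype_card 2 _ (by omega), hL] at himage
  refine Nat.le_of_mul_le_mul_left ?_ (by positivity : 0 < 2 ^ (n - 1))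
  calc 2 ^ (n - 1) * 2 ^ (n + 1) = 2 ^ (2 * n) := by rw [← pow_add]; congr 1; omega
    _ ≤ L.natDegree * _ := himage
    _ ≤ _ := Nat.mul_le_mul_right _ hLdeg

theorem exists_hAT_eq (hn : n ≠ 0) {t : F} (ht : t ^ 2 ^ n = t) : ∃ y, hAT n y = t := by
  classical
  have := Fintype.ofFinite F
  set g : F[X] := (X ^ 2 + X) ^ 2 ^ n + (X ^ 2 + X)
  have hg : g.natDegree = 2 ^ (n + 1) := by
    have h2 : (X ^ 2 + X : F[X]).natDegree = 2 := by compute_degree!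
    rw [natDegree_add_eq_left_of_natDegree_lt, natDegree_pow, h2, pow_succ]
    rw [natDegree_pow, h2]
    have := Nat.one_lt_two_pow hn
    omega
  have hsub : univ.image (hAT n) ⊆ ({w | g.eval w = 0} : Finset F) := by
    simp only [subset_iff, mem_image, mem_filter, mem_univ, true_and, forall_exists_index,
      forall_apply_eq_imp_iff]
    intro y
    have hy : (y ^ 2 ^ n) ^ 2 ^ n = y := by
      rw [← pow_mul, ← pow_add, ← two_mul, GaloisField.pow_card_eq_self]
    simp only [g, eval_add, eval_pow, eval_X, hAT_sq_add_hAT]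
    rw [add_pow_char_pow, hy]
    grind
  have hW : #({w | g.eval w = 0} : Finset F) ≤ 2 ^ (n + 1) :=
    hg ▸ card_filter_eval_eq_zero_le fun h => by
      rw [h, natDegree_zero] at hg
      exact absurd hg (pow_pos two_pos _).ne
  have heq := eq_of_subset_of_card_le hsub (hW.trans (two_pow_succ_le_card_image_hAT hn))
  have ht' : t ∈ univ.image (hAT n) := by
    simp only [heq, mem_filter, mem_univ, true_and, g, eval_add, eval_pow, eval_X]
    rw [add_pow_char_pow, pow_right_comm t 2, ht, CharTwo.add_self_eq_zero]
  obtain ⟨y, -, hy⟩ := mem_image.mp ht'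
  exact ⟨y, hy⟩

theorem eq_one_of_forall_hAT_mul_eq_zero (hn : 2 ≤ n) {c : F} (hc : c ≠ 0)
    (h : ∀ y, hAT n y = 0 → hAT n (c * y) = 0) : c = 1 := by
  classical
  have := Fintype.ofFinite F
  obtain ⟨r, rfl⟩ : ∃ r, c = r ^ 2 := by
    obtain ⟨r, hr⟩ := FiniteField.isSquare_of_char_two (ringChar.eq F 2) c
    exact ⟨r, hr.trans (sq r).symm⟩
  set d := r + r ^ 2
  set e := r ^ 2 ^ n + r
  have hvan : ∀ z : F, z ^ 2 ^ n = z → hAT n (d * z) + e * z = 0 := by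
    intro z hz
    have hker : hAT n (z ^ 2 + z) = 0 := by
      rw [hAT_add, hAT_sq_eq_add, hz]
      grind
    rw [← h _ hker, show r ^ 2 * (z ^ 2 + z) = (r * z) ^ 2 + r ^ 2 * z by ring, hAT_add,
      hAT_sq_eq_add, mul_pow, hz, add_mul, hAT_add]
    ring
  set R : F[X] := ∑ i ∈ range n, (C d * X) ^ 2 ^ i + C e * X
  have hR : R = 0 := by
    refine eq_zero_of_natDegree_lt_card_of_eval_eq_zero' R {z | z ^ 2 ^ n = z}
      (fun z hz => by simp [R, eval_sum_pow_two_pow, hvan z (mem_filter.mp hz).2]) ?_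
    refine lt_of_lt_of_le ?_ (FiniteField.le_card_filter_pow_eq_self (by omega)
      (GaloisField.fintype_card 2 _ (by omega)))
    have hlin : ∀ a : F, (C a * X).natDegree ≤ 1 := fun a => by
      simpa using natDegree_C_mul_X_pow_le a 1
    calc R.natDegree ≤ 2 ^ (n - 1) := by
          refine natDegree_add_le_of_degree_le ?_ ((hlin e).trans Nat.one_le_two_pow)
          exact (natDegree_sum_pow_two_pow_le n _).trans (by simpa using hlin d)
      _ < 2 ^ n := Nat.pow_lt_pow_right one_lt_two (by omega)
  have hd : d = 0 := by
    simpa [R, coeff_two_sum_pow_two_pow n _ hn] using congrArg (coeff · 2) hR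
  grind

theorem sum_pow_two_pow_eq_of_forall_hAT_eval_eq (hn : n ≠ 0) {a b : F} {s : F[X]}
    (hs : s.natDegree ≤ 3)
    (h : ∀ x, hAT n (s.eval x) = x ^ (2 ^ n + 1) + (a * x + b) ^ (2 ^ n + 1)) :
    ∑ i ∈ range n, s ^ 2 ^ i = C (1 + a ^ 2 ^ n * a) * X ^ (2 ^ n + 1) +
      C (a ^ 2 ^ n * b) * X ^ 2 ^ n + C (a * b ^ 2 ^ n) * X + C (b ^ 2 ^ n * b) := by
  have := Fintype.ofFinite F
  refine eq_of_natDegree_lt_card_of_eval_eq _ _ Function.injective_id (fun x => ?_) ?_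
  · simp only [id, eval_sum_pow_two_pow, h, eval_add, eval_mul, eval_C, eval_pow, eval_X]
    rw [pow_succ _ (2 ^ n), pow_succ _ (2 ^ n), add_pow_char_pow, mul_pow]
    ring
  · rw [GaloisField.fintype_card 2 _ (by omega)]
    have hL := (natDegree_sum_pow_two_pow_le n s).trans (Nat.mul_le_mul_left _ hs)
    have hR : (C (1 + a ^ 2 ^ n * a) * X ^ (2 ^ n + 1) + C (a ^ 2 ^ n * b) * X ^ 2 ^ n +
        C (a * b ^ 2 ^ n) * X + C (b ^ 2 ^ n * b)).natDegree ≤ 2 ^ n + 1 := by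
      compute_degree
    have e : 2 ^ (2 * n) = 2 ^ n * 2 ^ n := by rw [← pow_add, two_mul]
    have e' : 2 ^ n = 2 * 2 ^ (n - 1) := by rw [← pow_succ']; congr 1; omega
    have := Nat.one_le_two_pow (n := n - 1)
    rw [e]
    exact max_lt (hL.trans_lt (by nlinarith)) (hR.trans_lt (by nlinarith))

theorem coeff_eq_of_forall_hAT_eval_eq (hn : 2 ≤ n) {a b : F} {s : F[X]} (hs : s.natDegree ≤ 3)
    (h : ∀ x, hAT n (s.eval x) = x ^ (2 ^ n + 1) + (a * x + b) ^ (2 ^ n + 1)) :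
    hAT n (s.coeff 0) = b ^ (2 ^ n + 1) ∧ s.coeff 1 = a * b ^ 2 ^ n ∧
      s.coeff 2 = a ^ 2 * b ^ (2 * 2 ^ n) ∧ s.coeff 3 = 0 := by
  have hq : 4 ≤ 2 ^ n := by simpa using Nat.pow_le_pow_right two_pos hn
  have hcoeff := fun m => congrArg (coeff · m)
    (sum_pow_two_pow_eq_of_forall_hAT_eval_eq (by omega) hs h)
  simp only [coeff_add, coeff_C_mul, coeff_X_pow, coeff_X, coeff_C] at hcoeff
  have hq0 : 0 ≠ 2 ^ n := by omega
  have hq1 : 1 ≠ 2 ^ n := by omega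
  have hq3 : 3 ≠ 2 ^ n := by omega
  have hq2 : 2 ^ n ≠ 2 := by omega
  refine ⟨?_, ?_, ?_, ?_⟩
  · have h0 := hcoeff 0
    rw [coeff_zero_sum_pow_two_pow] at h0
    simpa [pow_succ, hq0] using h0
  · simpa [coeff_sum_pow_two_pow_of_odd n s (by omega) odd_one, hq1] using hcoeff 1
  · have h2 : s.coeff 2 ^ 2 ^ (n - 1) = a ^ 2 ^ n * b := by
      simpa [coeff_two_pow_sum_pow_two_pow_of_natDegree_le_three n s (by omega) hs, hq1]
        using hcoeff (2 ^ n)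
    calc s.coeff 2 = (s.coeff 2 ^ 2 ^ (n - 1)) ^ 2 ^ (n + 1) := by
          rw [← pow_mul, ← pow_add, show n - 1 + (n + 1) = 2 * n by omega,
            GaloisField.pow_card_eq_self]
      _ = a ^ 2 * b ^ (2 * 2 ^ n) := by
          rw [h2, mul_pow, ← pow_mul, ← pow_add, show n + (n + 1) = 2 * n + 1 by omega,
            pow_succ 2 (2 * n), pow_mul, GaloisField.pow_card_eq_self, pow_succ' 2 n]
  · simpa [coeff_sum_pow_two_pow_of_odd n s (by omega) (by decide : Odd 3), hq3, hq2]
      using hcoeff 3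

theorem stmt16_general (n : ℕ) (hn : 2 ≤ n) (a c b : GaloisField 2 (2*n))
    (hc : c ≠ 0)
    (s : Polynomial (GaloisField 2 (2*n))) (hs : s.natDegree ≤ 3)
    (H : ∀ x0 y0 : GaloisField 2 (2*n), hAT n y0 = x0 ^ (2 ^ n + 1) →
      hAT n (c * y0 + s.eval x0) = (a * x0 + b) ^ (2 ^ n + 1)) :
    c = 1 ∧ ∃ e : GaloisField 2 (2*n), hAT n e = b ^ (2 ^ n + 1) ∧
      s = Polynomial.C (a ^ 2 * b ^ (2 * 2 ^ n)) * Polynomial.X ^ 2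
            + Polynomial.C (a * b ^ (2 ^ n)) * Polynomial.X + Polynomial.C e := by
  have hs0 : hAT n (s.eval 0) = b ^ (2 ^ n + 1) := by
    simpa [hAT_zero] using H 0 0 (by simp [hAT_zero])
  obtain rfl : c = 1 := eq_one_of_forall_hAT_mul_eq_zero hn hc fun y hy => by
    simpa [hAT_add, hs0] using H 0 y (by simp [hy])
  have key (x : GaloisField 2 (2 * n)) :
      hAT n (s.eval x) = x ^ (2 ^ n + 1) + (a * x + b) ^ (2 ^ n + 1) := by
    have hx : (x ^ (2 ^ n + 1)) ^ 2 ^ n = x ^ (2 ^ n + 1) := by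
      rw [← pow_mul, add_mul, one_mul, pow_add, ← pow_add 2 n n, ← two_mul,
        GaloisField.pow_card_eq_self, pow_succ']
    obtain ⟨y, hy⟩ := exists_hAT_eq (by omega) hx
    have := H x y hy
    rw [one_mul, hAT_add, hy] at this
    rw [← this, ← add_assoc, CharTwo.add_self_eq_zero, zero_add]
  obtain ⟨h0, h1, h2, h3⟩ := coeff_eq_of_forall_hAT_eval_eq hn hs key
  refine ⟨rfl, s.coeff 0, h0, ?_⟩
  ext m
  simp only [coeff_add, coeff_C_mul, coeff_X_pow, coeff_X, coeff_C]
  rcases m with _ | _ | _ | _ | m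
  · simp
  · simp [h1]
  · simp [h2]
  · simp [h3]
  · simp [coeff_eq_zero_of_natDegree_lt (by omega : s.natDegree < m + 4)]

theorem stmt16 (n : ℕ) (hn : 2 ≤ n) (a c b : GaloisField 2 (2*n))
    (ha : a ≠ 0) (hc : c ≠ 0)
    (s : Polynomial (GaloisField 2 (2*n))) (hs : s.natDegree ≤ 3)
    (H : ∀ x0 y0 : GaloisField 2 (2*n), hAT n y0 = x0 ^ (2 ^ n + 1) →
      hAT n (c * y0 + s.eval x0) = (a * x0 + b) ^ (2 ^ n + 1)) :
    c = 1 ∧ ∃ e : GaloisField 2 (2*n), hAT n e = b ^ (2 ^ n + 1) ∧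
      s = Polynomial.C (a ^ 2 * b ^ (2 * 2 ^ n)) * Polynomial.X ^ 2
            + Polynomial.C (a * b ^ (2 ^ n)) * Polynomial.X + Polynomial.C e :=
  stmt16_general n hn a c b hc s hs H
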